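/- arXiv:2504.20705 — 4 statements merged into one kernel-verified Lean document; each statement's English description precedes it below -/
import Mathlib

section
/- Under Assumptions 1, 2 and 3, for every Δ₀ > 0, every p > 0 and every T ∈ ℤ_{≥0} there exists Δ > 0 such that for every γ ∈ (0,1), every initial state x₀ ∈ 𝒳 with σ(x₀) < Δ₀ and every strictly causal random closed-loop solution x = (x_0, x_1, …) ∈ S_γ^η(x₀): ℙ(σ(x_k) < Δ for all k ∈ {0,…,T}) > 1 − p. (Boundedness with high probability, uniformly in the discount factor.) -/
open MeasureTheory Set Filter
open scoped ENNReal NNReal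

noncomputable section

/-- Euclidean space `ℝ^k`. -/
abbrev Euc (k : ℕ) := EuclideanSpace ℝ (Fin k)

/-- A class-`𝒦∞` function: continuous, strictly increasing and unbounded on `[0, ∞)`,
nonnegative there, and vanishing at `0`. -/
def IsKInfty (α : ℝ → ℝ) : Prop :=
  ContinuousOn α (Ici 0) ∧ StrictMonoOn α (Ici 0) ∧ α 0 = 0 ∧
    (∀ s, 0 ≤ s → 0 ≤ α s) ∧ Tendsto α atTop atTop

variable {𝕏 𝕌 𝕍 Ω : Type*}

/-- The closed-loop trajectory `φ(k, x, h)` of `x⁺ = f(x, h(x), v)` driven by the random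
input sequence `vs`. -/
def traj (f : 𝕏 → 𝕌 → 𝕍 → 𝕏) (vs : ℕ → Ω → 𝕍) (h : 𝕏 → 𝕌) (x : 𝕏) : ℕ → Ω → 𝕏
  | 0 => fun _ => x
  | k + 1 => fun ω => f (traj f vs h x k ω) (h (traj f vs h x k ω)) (vs k ω)

/-- The expected infinite-horizon discounted cost `J_γ(x, h)`, valued in `[0, ∞]`. -/
def cost [MeasurableSpace Ω] (P : Measure Ω) (f : 𝕏 → 𝕌 → 𝕍 → 𝕏) (vs : ℕ → Ω → 𝕍)
    (ℓ : 𝕏 → 𝕌 → ℝ) (γ : ℝ) (x : 𝕏) (h : 𝕏 → 𝕌) : ℝ≥0∞ :=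
  ∫⁻ ω, ∑' k : ℕ, ENNReal.ofReal (γ ^ k * ℓ (traj f vs h x k ω) (h (traj f vs h x k ω))) ∂P

/-- The optimal value function `V_γ(x)` as an extended nonnegative real:
the infimum of `J_γ(x, ·)` over all admissible (measurable, `𝒳 → 𝒰`) policies. -/
def evalue [MeasurableSpace Ω] [MeasurableSpace 𝕏] [MeasurableSpace 𝕌] (P : Measure Ω)
    (X : Set 𝕏) (U : Set 𝕌) (f : 𝕏 → 𝕌 → 𝕍 → 𝕏) (vs : ℕ → Ω → 𝕍)
    (ℓ : 𝕏 → 𝕌 → ℝ) (γ : ℝ) (x : 𝕏) : ℝ≥0∞ :=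
  ⨅ h : {h : 𝕏 → 𝕌 // Measurable h ∧ MapsTo h X U}, cost P f vs ℓ γ x h.1

/-- The (real-valued) optimal value function `V_γ(x)`. -/
def value [MeasurableSpace Ω] [MeasurableSpace 𝕏] [MeasurableSpace 𝕌] (P : Measure Ω)
    (X : Set 𝕏) (U : Set 𝕌) (f : 𝕏 → 𝕌 → 𝕍 → 𝕏) (vs : ℕ → Ω → 𝕍)
    (ℓ : 𝕏 → 𝕌 → ℝ) (γ : ℝ) (x : 𝕏) : ℝ :=
  (evalue P X U f vs ℓ γ x).toReal

/-- The expectation `E[V_γ(f(x, u, v))]` of the value function after one step. -/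
def expValNext [MeasurableSpace Ω] [MeasurableSpace 𝕏] [MeasurableSpace 𝕌] (P : Measure Ω)
    (X : Set 𝕏) (U : Set 𝕌) (f : 𝕏 → 𝕌 → 𝕍 → 𝕏) (vs : ℕ → Ω → 𝕍) (v : Ω → 𝕍)
    (ℓ : 𝕏 → 𝕌 → ℝ) (γ : ℝ) (x : 𝕏) (u : 𝕌) : ℝ :=
  ∫ ω, value P X U f vs ℓ γ (f x u (v ω)) ∂P

/-- The near-optimal set-valued feedback `U_γ^η(x)`. -/
def Ufb [MeasurableSpace Ω] [MeasurableSpace 𝕏] [MeasurableSpace 𝕌] (P : Measure Ω)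
    (X : Set 𝕏) (U : Set 𝕌) (f : 𝕏 → 𝕌 → 𝕍 → 𝕏) (vs : ℕ → Ω → 𝕍) (v : Ω → 𝕍)
    (ℓ : 𝕏 → 𝕌 → ℝ) (η : 𝕏 → ℝ) (γ : ℝ) (x : 𝕏) : Set 𝕌 :=
  {u ∈ U | ℓ x u + γ * expValNext P X U f vs v ℓ γ x u ≤ value P X U f vs ℓ γ x + η x}

/-- `filt vs k` is the σ-algebra `ℱ_{k-1} = σ(v_0, …, v_{k-1})` generated by the first `k`
random inputs (so `filt vs 0` is the trivial σ-algebra `ℱ_{-1}`). -/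
def filt [MeasurableSpace 𝕍] (vs : ℕ → Ω → 𝕍) (k : ℕ) : MeasurableSpace Ω :=
  MeasurableSpace.comap (fun ω => fun i : Fin k => vs i ω) MeasurableSpace.pi

/-- Strictly causal random closed-loop solutions of `x⁺ = f(x, u, v)`, `u ∈ U_γ^η(x)`,
with initial state `x0` (Definition 1). -/
def IsSCSol [MeasurableSpace Ω] [MeasurableSpace 𝕏] [MeasurableSpace 𝕌] [MeasurableSpace 𝕍]
    (P : Measure Ω) (X : Set 𝕏) (U : Set 𝕌) (f : 𝕏 → 𝕌 → 𝕍 → 𝕏)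
    (vs : ℕ → Ω → 𝕍) (v : Ω → 𝕍) (ℓ : 𝕏 → 𝕌 → ℝ) (η : 𝕏 → ℝ)
    (γ : ℝ) (x0 : 𝕏) (xs : ℕ → Ω → 𝕏) : Prop :=
  (∀ k ω, xs k ω ∈ X) ∧ (∀ ω, xs 0 ω = x0) ∧
    ∀ k : ℕ, ∃ u : Ω → 𝕌,
      Measurable[filt vs k] u ∧
      (∀ ω, u ω ∈ Ufb P X U f vs v ℓ η γ (xs k ω)) ∧
      ∀ ω, xs (k + 1) ω = f (xs k ω) (u ω) (vs k ω)

/-!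
Take a compact set `K` of noise values that each `v_k` leaves with probability less than
`min p 1 / T`. While the noise stays in `K`, local boundedness of `f` and of the feedback
`U_{(0,1)}^η` keeps `x_k` inside compact sets `D_k`, built recursively from the compact sublevel
set `{σ ≤ Δ₀}` and independent of `γ`; `σ` is bounded on `D_0 ∪ … ∪ D_T`, and a union bound
over the `T` noise samples gives the probability estimate.
-/

section ReachableSets

variable {α β ν : Type*} [PseudoMetricSpace α] [ProperSpace α] [PseudoMetricSpace β]
  [ProperSpace β] [TopologicalSpace ν] {X : Set α} {U : Set β} {V : Set ν}
  {f : α → β → ν → α} {F : α → Set β} {K : Set ν}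

theorem exists_isCompact_superset_image_step (hX : IsClosed X) (hU : IsClosed U)
    (hfX : ∀ x ∈ X, ∀ u ∈ U, ∀ w ∈ V, f x u w ∈ X)
    (hf : ∀ K1 ⊆ X, ∀ K2 ⊆ U, ∀ K3 ⊆ V, IsCompact K1 → IsCompact K2 → IsCompact K3 →
      Bornology.IsBounded {y | ∃ x ∈ K1, ∃ u ∈ K2, ∃ w ∈ K3, y = f x u w})
    (hFU : ∀ x, F x ⊆ U) (hF : ∀ D ⊆ X, IsCompact D → Bornology.IsBounded (⋃ x ∈ D, F x))
    (hK : IsCompact K) (hKV : K ⊆ V) {D : Set α} (hD : IsCompact D) (hDX : D ⊆ X) :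
    ∃ D' ⊆ X, IsCompact D' ∧ ∀ x ∈ D, ∀ u ∈ F x, ∀ w ∈ K, f x u w ∈ D' := by
  set C := closure (⋃ x ∈ D, F x)
  have hC : IsCompact C := (hF D hDX hD).isCompact_closure
  have hCU : C ⊆ U := closure_minimal (iUnion₂_subset fun x _ => hFU x) hU
  refine ⟨closure {y | ∃ x ∈ D, ∃ u ∈ C, ∃ w ∈ K, y = f x u w}, ?_,
    (hf D hDX C hCU K hKV hD hC hK).isCompact_closure, ?_⟩
  · refine closure_minimal ?_ hX
    rintro _ ⟨x, hx, u, hu, w, hw, rfl⟩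
    exact hfX x (hDX hx) u (hCU hu) w (hKV hw)
  · intro x hx u hu w hw
    exact subset_closure ⟨x, hx, u, subset_closure (mem_biUnion hx hu), w, hw, rfl⟩

theorem exists_isCompact_reachable_seq (hX : IsClosed X) (hU : IsClosed U)
    (hfX : ∀ x ∈ X, ∀ u ∈ U, ∀ w ∈ V, f x u w ∈ X)
    (hf : ∀ K1 ⊆ X, ∀ K2 ⊆ U, ∀ K3 ⊆ V, IsCompact K1 → IsCompact K2 → IsCompact K3 →
      Bornology.IsBounded {y | ∃ x ∈ K1, ∃ u ∈ K2, ∃ w ∈ K3, y = f x u w})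
    (hFU : ∀ x, F x ⊆ U) (hF : ∀ D ⊆ X, IsCompact D → Bornology.IsBounded (⋃ x ∈ D, F x))
    (hK : IsCompact K) (hKV : K ⊆ V) {D₀ : Set α} (hD₀ : IsCompact D₀) (hD₀X : D₀ ⊆ X) :
    ∃ D : ℕ → Set α, D 0 = D₀ ∧ (∀ k, D k ⊆ X ∧ IsCompact (D k)) ∧
      ∀ k, ∀ x ∈ D k, ∀ u ∈ F x, ∀ w ∈ K, f x u w ∈ D (k + 1) := by
  have step (D : {D : Set α // D ⊆ X ∧ IsCompact D}) :
      ∃ D' : {D : Set α // D ⊆ X ∧ IsCompact D},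
        ∀ x ∈ D.1, ∀ u ∈ F x, ∀ w ∈ K, f x u w ∈ D'.1 := by
    obtain ⟨D', hD'X, hD', hmem⟩ :=
      exists_isCompact_superset_image_step hX hU hfX hf hFU hF hK hKV D.2.2 D.2.1
    exact ⟨⟨D', hD'X, hD'⟩, hmem⟩
  choose next hnext using step
  refine ⟨fun k => (next^[k] ⟨D₀, hD₀X, hD₀⟩).1, rfl, fun k => (next^[k] _).2, fun k => ?_⟩
  simpa only [Function.iterate_succ_apply'] using hnext _

end ReachableSets

theorem exists_pos_forall_lt_of_isCompact {α : Type*} [TopologicalSpace α] {X : Set α}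
    {σ : α → ℝ} (hσ : ∀ K ⊆ X, IsCompact K → Bornology.IsBounded (σ '' K)) {D : ℕ → Set α}
    (hD : ∀ k, D k ⊆ X ∧ IsCompact (D k)) (T : ℕ) :
    ∃ Δ > (0 : ℝ), ∀ k ≤ T, ∀ x ∈ D k, σ x < Δ := by
  have hC : IsCompact (⋃ k ∈ Iic T, D k) :=
    (finite_Iic T).isCompact_biUnion fun k _ => (hD k).2
  obtain ⟨M, hM⟩ := (hσ _ (iUnion₂_subset fun k _ => (hD k).1) hC).bddAbove
  refine ⟨max M 0 + 1, by positivity, fun k hk x hx => ?_⟩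
  have : σ x ≤ M := hM ⟨x, mem_biUnion (mem_Iic.mpr hk) hx, rfl⟩
  linarith [le_max_left M 0]

theorem IsSCSol.mem_of_forall_lt_mem [MeasurableSpace Ω] [MeasurableSpace 𝕏]
    [MeasurableSpace 𝕌] [MeasurableSpace 𝕍] {P : Measure Ω} {X : Set 𝕏} {U : Set 𝕌}
    {f : 𝕏 → 𝕌 → 𝕍 → 𝕏} {vs : ℕ → Ω → 𝕍} {v : Ω → 𝕍} {ℓ : 𝕏 → 𝕌 → ℝ} {η : 𝕏 → ℝ}
    {γ : ℝ} {x0 : 𝕏} {xs : ℕ → Ω → 𝕏} (hsol : IsSCSol P X U f vs v ℓ η γ x0 xs)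
    {D : ℕ → Set 𝕏} {K : Set 𝕍} (h0 : x0 ∈ D 0)
    (hD : ∀ k, ∀ x ∈ D k, ∀ u ∈ Ufb P X U f vs v ℓ η γ x, ∀ w ∈ K, f x u w ∈ D (k + 1))
    {T : ℕ} {ω : Ω} (hω : ∀ k < T, vs k ω ∈ K) : ∀ k ≤ T, xs k ω ∈ D k := by
  intro k hk
  induction k with
  | zero => exact hsol.2.1 ω ▸ h0
  | succ k ih =>
    obtain ⟨u, -, hu, hxs⟩ := hsol.2.2 k
    rw [hxs ω]
    exact hD k _ (ih (by omega)) _ (hu ω) _ (hω k (by omega))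

theorem exists_isCompact_subset_measure_compl_lt {α : Type*} [TopologicalSpace α]
    [MeasurableSpace α] [OpensMeasurableSpace α] [T2Space α] {μ : Measure α}
    [IsFiniteMeasure μ] [μ.InnerRegularCompactLTTop] {V : Set α} (hV : MeasurableSet V)
    (hVc : μ Vᶜ = 0) {ε : ℝ≥0∞} (hε : ε ≠ 0) :
    ∃ K ⊆ V, IsCompact K ∧ μ Kᶜ < ε := by
  obtain ⟨K, hKV, hK, hμK⟩ := hV.exists_isCompact_sdiff_lt (measure_ne_top μ V) hε
  refine ⟨K, hKV, hK, ?_⟩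
  rwa [← measure_inter_conull hVc, inter_comm, ← sdiff_eq]

theorem measure_exists_lt_notMem_le {α : Type*} [MeasurableSpace Ω] [MeasurableSpace α]
    {P : Measure Ω} {μ : Measure α} {vs : ℕ → Ω → α} (hvs : ∀ k, Measurable (vs k))
    (hident : ∀ k, P.map (vs k) = μ) {K : Set α} (hK : MeasurableSet K) (T : ℕ) :
    P {ω | ∃ k < T, vs k ω ∉ K} ≤ T * μ Kᶜ := by
  have hset : {ω | ∃ k < T, vs k ω ∉ K} = ⋃ k ∈ Finset.range T, vs k ⁻¹' Kᶜ := by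
    ext ω
    simp
  calc P {ω | ∃ k < T, vs k ω ∉ K}
      ≤ ∑ k ∈ Finset.range T, P (vs k ⁻¹' Kᶜ) := hset ▸ measure_biUnion_finset_le _ _
    _ = T * μ Kᶜ := by
      simp only [← Measure.map_apply (hvs _) hK.compl, hident, Finset.sum_const,
        Finset.card_range, nsmul_eq_mul]

theorem lt_measure_of_measure_compl_lt_one_sub [MeasurableSpace Ω] {P : Measure Ω}
    [IsProbabilityMeasure P] {A : Set Ω} {a : ℝ≥0∞} (ha : a ≤ 1) (h : P Aᶜ < 1 - a) :
    a < P A := by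
  by_contra! hA
  have := calc
    (1 : ℝ≥0∞) = P (A ∪ Aᶜ) := by rw [union_compl_self, measure_univ]
    _ ≤ P A + P Aᶜ := measure_union_le _ _
    _ < a + (1 - a) := ENNReal.add_lt_add_of_le_of_lt (measure_ne_top P A) hA h
    _ = 1 := add_tsub_cancel_of_le ha
  exact this.false

theorem boundedness_with_high_probability_general
    (n m q : ℕ) (Ω : Type) [MeasurableSpace Ω] (P : Measure Ω) [IsProbabilityMeasure P]
    (X : Set (Euc n)) (U : Set (Euc m)) (Vs : Set (Euc q))
    (hX : IsClosed X) (hU : IsClosed U) (hVs : MeasurableSet Vs)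
    (f : Euc n → Euc m → Euc q → Euc n)
    (hfmaps : ∀ x ∈ X, ∀ u ∈ U, ∀ w ∈ Vs, f x u w ∈ X)
    (v : Ω → Euc q) (vs : ℕ → Ω → Euc q)
    (hv : Measurable v) (hvmem : ∀ ω, v ω ∈ Vs)
    (hvsmeas : ∀ k, Measurable (vs k))
    (hident : ∀ k, Measure.map (vs k) P = Measure.map v P)
    (ℓ : Euc n → Euc m → ℝ)
    (η : Euc n → ℝ)
    -- state-space measure `σ`
    (σ : Euc n → ℝ) (hσnn : ∀ x, 0 ≤ σ x)
    (hσlocb : ∀ K ⊆ X, IsCompact K → Bornology.IsBounded (σ '' K))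
    (hσru : ∀ B : Set ℝ, Bornology.IsBounded B → Bornology.IsBounded {x ∈ X | σ x ∈ B})
    -- Assumption 3: `f` and `U_{(0,1)}^η` are locally bounded
    (hflocb : ∀ K1 ⊆ X, ∀ K2 ⊆ U, ∀ K3 ⊆ Vs, IsCompact K1 → IsCompact K2 → IsCompact K3 →
      Bornology.IsBounded {y | ∃ x ∈ K1, ∃ u ∈ K2, ∃ w ∈ K3, y = f x u w})
    (hUlocb : ∀ D ⊆ X, IsCompact D →
      Bornology.IsBounded (⋃ x ∈ D, ⋃ γ ∈ Ioo (0:ℝ) 1, Ufb P X U f vs v ℓ η γ x))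
    :
    ∀ Δ0 > (0:ℝ), ∀ p > (0:ℝ), ∀ T : ℕ, ∃ Δ > (0:ℝ),
      ∀ γ ∈ Ioo (0:ℝ) 1, ∀ x0 ∈ X, σ x0 < Δ0 →
        ∀ xs : ℕ → Ω → Euc n, IsSCSol P X U f vs v ℓ η γ x0 xs →
          P {ω | ∀ k ≤ T, σ (xs k ω) < Δ} > ENNReal.ofReal (1 - p) := by
  intro Δ0 _ p hp T
  set δ := 1 - ENNReal.ofReal (1 - p)
  have hδ : δ ≠ 0 := (tsub_pos_of_lt (ENNReal.ofReal_lt_one.mpr (by linarith))).ne'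
  have hVsc : P.map v Vsᶜ = 0 := by
    have hpre : v ⁻¹' Vs = univ := eq_univ_of_forall hvmem
    rw [Measure.map_apply hv hVs.compl, preimage_compl, hpre, compl_univ, measure_empty]
  -- a union bound over the first `T` noise samples keeps them all in `K` outside probability `δ`
  obtain ⟨K, hKVs, hK, hμK⟩ := exists_isCompact_subset_measure_compl_lt hVs hVsc
    (ε := δ / T) (by simp [hδ])
  obtain ⟨D, hD0, hD, hstep⟩ := exists_isCompact_reachable_seq hX hU hfmaps hflocb
    (F := fun x => ⋃ γ ∈ Ioo (0:ℝ) 1, Ufb P X U f vs v ℓ η γ x)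
    (fun x => iUnion₂_subset fun _ _ _ hu => hu.1) hUlocb hK hKVs
    (hσru _ (Metric.isBounded_Icc 0 Δ0)).isCompact_closure
    (closure_minimal (fun _ hx => hx.1) hX)
  obtain ⟨Δ, hΔ, hσΔ⟩ := exists_pos_forall_lt_of_isCompact hσlocb hD T
  refine ⟨Δ, hΔ, fun γ hγ x0 hx0 hσx0 xs hsol => ?_⟩
  have hgood : {ω | ∃ k < T, vs k ω ∉ K}ᶜ ⊆ {ω | ∀ k ≤ T, σ (xs k ω) < Δ} := by
    intro ω hω k hk
    have hmem := hsol.mem_of_forall_lt_mem (hD0 ▸ subset_closure ⟨hx0, hσnn x0, hσx0.le⟩)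
      (fun k x hx u hu => hstep k x hx u (mem_biUnion hγ hu)) (by simpa using hω) k hk
    exact hσΔ k hk _ hmem
  have hbad : P {ω | ∃ k < T, vs k ω ∉ K} < δ :=
    (measure_exists_lt_notMem_le hvsmeas hident hK.isClosed.measurableSet T).trans_lt
      (ENNReal.mul_lt_of_lt_div' hμK)
  exact (lt_measure_of_measure_compl_lt_one_sub (ENNReal.ofReal_le_one.mpr (by linarith))
    (by rwa [compl_compl])).trans_le (measure_mono hgood)

theorem boundedness_with_high_probability
    (n m q : ℕ) (Ω : Type) [MeasurableSpace Ω] (P : Measure Ω) [IsProbabilityMeasure P]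
    (X : Set (Euc n)) (U : Set (Euc m)) (Vs : Set (Euc q))
    (hX : IsClosed X) (hU : IsClosed U) (hVs : MeasurableSet Vs)
    (f : Euc n → Euc m → Euc q → Euc n)
    (hfmaps : ∀ x ∈ X, ∀ u ∈ U, ∀ w ∈ Vs, f x u w ∈ X)
    (v : Ω → Euc q) (vs : ℕ → Ω → Euc q)
    (hv : Measurable v) (hvmem : ∀ ω, v ω ∈ Vs)
    (hvsmeas : ∀ k, Measurable (vs k)) (hvsmem : ∀ k ω, vs k ω ∈ Vs)
    (hiid : ProbabilityTheory.iIndepFun vs P)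
    (hident : ∀ k, Measure.map (vs k) P = Measure.map v P)
    (ℓ : Euc n → Euc m → ℝ) (hℓnn : ∀ x u, 0 ≤ ℓ x u)
    (η : Euc n → ℝ) (hηnn : ∀ x, 0 ≤ η x)
    -- Assumption 1 (measurability; `V_γ` finite and measurable)
    (hfmeas : Measurable fun p : Euc n × Euc m × Euc q => f p.1 p.2.1 p.2.2)
    (hℓmeas : Measurable fun p : Euc n × Euc m => ℓ p.1 p.2)
    (hηmeas : Measurable η)
    (hVfin : ∀ γ ∈ Ioo (0:ℝ) 1, ∀ x ∈ X, evalue P X U f vs ℓ γ x ≠ ⊤)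
    (hVmeas : ∀ γ ∈ Ioo (0:ℝ) 1, Measurable (value P X U f vs ℓ γ))
    -- state-space measure `σ`
    (σ : Euc n → ℝ) (hσnn : ∀ x, 0 ≤ σ x) (hσmeas : Measurable σ)
    (hσlocb : ∀ K ⊆ X, IsCompact K → Bornology.IsBounded (σ '' K))
    (hσru : ∀ B : Set ℝ, Bornology.IsBounded B → Bornology.IsBounded {x ∈ X | σ x ∈ B})
    -- Assumption 2(i): cost-controllability with lower bound
    (αV : ℝ → ℝ) (hαV : IsKInfty αV)
    (e1 e2 : ℝ) (he1 : 0 ≤ e1) (he2 : 0 ≤ e2)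
    (cγ : ℝ → ℝ) (hcγnn : ∀ γ ∈ Ioo (0:ℝ) 1, 0 ≤ cγ γ)
    (hcc : ∀ γ ∈ Ioo (0:ℝ) 1, ∀ x ∈ X,
      -e1 ≤ value P X U f vs ℓ γ x - cγ γ / (1 - γ) ∧
        value P X U f vs ℓ γ x - cγ γ / (1 - γ) ≤ e2 + αV (σ x))
    (c : ℝ) (hcnn : 0 ≤ c) (hcbd : ∀ γ ∈ Ioo (0:ℝ) 1, cγ γ ≤ c)
    -- Assumption 2(ii): detectability
    (W : Euc n → ℝ) (hWnn : ∀ x, 0 ≤ W x) (hWmeas : Measurable W)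
    (αWu αWl : ℝ → ℝ) (hαWu : IsKInfty αWu) (hαWl : IsKInfty αWl)
    (d : ℝ) (hd : 0 < d)
    (hWub : ∀ x ∈ X, W x ≤ αWu (σ x))
    (hdet : ∀ x ∈ X, ∀ u ∈ U,
      (∫ ω, W (f x u (v ω)) ∂P) - W x ≤ -αWl (σ x) + ℓ x u + d)
    -- Assumption 3: `f` and `U_{(0,1)}^η` are locally bounded
    (hflocb : ∀ K1 ⊆ X, ∀ K2 ⊆ U, ∀ K3 ⊆ Vs, IsCompact K1 → IsCompact K2 → IsCompact K3 →
      Bornology.IsBounded {y | ∃ x ∈ K1, ∃ u ∈ K2, ∃ w ∈ K3, y = f x u w})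
    (hUlocb : ∀ D ⊆ X, IsCompact D →
      Bornology.IsBounded (⋃ x ∈ D, ⋃ γ ∈ Ioo (0:ℝ) 1, Ufb P X U f vs v ℓ η γ x))
    :
    ∀ Δ0 > (0:ℝ), ∀ p > (0:ℝ), ∀ T : ℕ, ∃ Δ > (0:ℝ),
      ∀ γ ∈ Ioo (0:ℝ) 1, ∀ x0 ∈ X, σ x0 < Δ0 →
        ∀ xs : ℕ → Ω → Euc n, IsSCSol P X U f vs v ℓ η γ x0 xs →
          P {ω | ∀ k ≤ T, σ (xs k ω) < Δ} > ENNReal.ofReal (1 - p) :=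
  boundedness_with_high_probability_general n m q Ω P X U Vs hX hU hVs f hfmaps v vs hv hvmem
    hvsmeas hident ℓ η σ hσnn hσlocb hσru hflocb hUlocb
end
end

section
/- Under Assumptions 1, 2, 3 and 4, for every Δ₀ > 0, every p > 0 and every T ∈ ℤ_{≥0} there exist Δ > 0 and ε > 0 such that for every γ ∈ (0,1), every initial state x₀ ∈ 𝒳 with σ(x₀) < Δ₀ and every ε-perturbed strictly causal random closed-loop solution x = (x_0, x_1, …) ∈ S_{γ,ε}^η(x₀): ℙ(σ(x_k) < Δ for all k ∈ {0,…,T}) > 1 − p. (Robust boundedness with high probability.) -/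
open MeasureTheory Set Filter
open scoped ENNReal NNReal

noncomputable section

variable {𝕏 𝕌 𝕍 Ω : Type*}

/-- `ε`-perturbed strictly causal random closed-loop solutions (Definition 2). -/
def IsPertSCSol {n m q : ℕ} {Ω : Type} [MeasurableSpace Ω] (P : Measure Ω)
    (X : Set (Euc n)) (U : Set (Euc m))
    (f : Euc n → Euc m → Euc q → Euc n) (vs : ℕ → Ω → Euc q) (v : Ω → Euc q)
    (ℓ : Euc n → Euc m → ℝ) (η : Euc n → ℝ) (γ ε : ℝ) (x0 : Euc n)
    (xs : ℕ → Ω → Euc n) : Prop :=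
  (∀ k ω, xs k ω ∈ X) ∧ (∀ ω, xs 0 ω = x0) ∧
    ∀ k : ℕ, ∃ (u : Ω → Euc m) (p1 p2 : Ω → Euc n) (p3 : Ω → Euc m) (p4 : Ω → Euc n),
      Measurable[filt vs k] u ∧ Measurable[filt vs k] p2 ∧ Measurable[filt vs k] p3 ∧
      Measurable[filt vs (k + 1)] p1 ∧ Measurable[filt vs (k + 1)] p4 ∧
      (∀ ω, ‖p1 ω‖ < ε) ∧ (∀ ω, ‖p2 ω‖ < ε) ∧ (∀ ω, ‖p3 ω‖ < ε) ∧ (∀ ω, ‖p4 ω‖ < ε) ∧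
      (∀ ω, u ω ∈ U) ∧
      (∀ ω, xs k ω + p2 ω ∈ X ∧ u ω - p3 ω ∈ Ufb P X U f vs v ℓ η γ (xs k ω + p2 ω)) ∧
      (∀ ω, xs k ω + p1 ω ∈ X ∧ xs (k + 1) ω = f (xs k ω + p1 ω) (u ω) (vs k ω) + p4 ω)


/-!
The first `T` noise samples are jointly tight, so with probability close to one they all lie
in one compact set `K`. While the noise stays in `K`, local boundedness of `f` and of the
near-optimal feedback sets confines each state of an `ε`-perturbed solution started in the
compact closure of `{σ < Δ₀}` to a compact set, on which `σ` is bounded.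
-/

open Metric Bornology

theorem exists_isCompact_lt_measure_forall_lt_mem {Ω E : Type*} [MeasurableSpace Ω]
    [TopologicalSpace E] [PolishSpace E] [MeasurableSpace E] [BorelSpace E]
    (P : Measure Ω) [IsFiniteMeasure P] {vs : ℕ → Ω → E} (hvs : ∀ k, Measurable (vs k))
    {S : Set E} (hS : MeasurableSet S) (hvsS : ∀ k ω, vs k ω ∈ S) (T : ℕ) {a : ℝ≥0∞}
    (ha : a < P univ) : ∃ K ⊆ S, IsCompact K ∧ a < P {ω | ∀ j < T, vs j ω ∈ K} := by
  set F : Ω → Fin T → E := fun ω i => vs i ω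
  have hF : Measurable F := measurable_pi_lambda _ fun i => hvs i
  have hSpi : MeasurableSet (univ.pi fun _ : Fin T => S) := MeasurableSet.univ_pi fun _ => hS
  have hFS : F ⁻¹' univ.pi (fun _ => S) = univ :=
    eq_univ_of_forall fun ω => mem_univ_pi.2 fun i => hvsS i ω
  obtain ⟨L, hLS, hL, haL⟩ := hSpi.exists_lt_isCompact (μ := P.map F)
    (by rwa [Measure.map_apply hF hSpi, hFS])
  refine ⟨⋃ i, (fun x => x i) '' L, ?_, isCompact_iUnion fun i => hL.image (continuous_apply i), ?_⟩
  · exact iUnion_subset fun i => by rintro _ ⟨x, hx, rfl⟩; exact hLS hx i (mem_univ _)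
  rw [Measure.map_apply hF hL.measurableSet] at haL
  exact haL.trans_le <| measure_mono fun ω hω j hj => mem_iUnion.2 ⟨⟨j, hj⟩, F ω, hω, rfl⟩

theorem add_mem_cthickening {E : Type*} [SeminormedAddCommGroup E] {s : Set E} {x p : E}
    {ε : ℝ} (hx : x ∈ s) (hp : ‖p‖ ≤ ε) : x + p ∈ cthickening ε s :=
  mem_cthickening_of_dist_le _ x ε s hx (by rwa [dist_eq_norm, add_sub_cancel_left])

section PerturbedSolution

variable {n m q : ℕ} {Ω : Type} [MeasurableSpace Ω] {P : Measure Ω}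
  {X : Set (Euc n)} {U : Set (Euc m)} {Vs : Set (Euc q)} {f : Euc n → Euc m → Euc q → Euc n}
  {vs : ℕ → Ω → Euc q} {v : Ω → Euc q} {ℓ : Euc n → Euc m → ℝ} {η : Euc n → ℝ} {ε : ℝ}
  {K : Set (Euc q)}

theorem exists_isCompact_forall_isPertSCSol_succ_mem (hX : IsClosed X) (hU : IsClosed U)
    (hflocb : ∀ K1 ⊆ X, ∀ K2 ⊆ U, ∀ K3 ⊆ Vs, IsCompact K1 → IsCompact K2 → IsCompact K3 →
      IsBounded {y | ∃ x ∈ K1, ∃ u ∈ K2, ∃ w ∈ K3, y = f x u w})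
    (hUlocb : ∀ D ⊆ X, IsCompact D →
      IsBounded (⋃ x ∈ D, ⋃ γ ∈ Ioo (0:ℝ) 1, Ufb P X U f vs v ℓ η γ x))
    (hK : IsCompact K) (hKVs : K ⊆ Vs) {C : Set (Euc n)} (hC : IsCompact C) :
    ∃ C', IsCompact C' ∧ ∀ γ ∈ Ioo (0:ℝ) 1, ∀ x0 xs, IsPertSCSol P X U f vs v ℓ η γ ε x0 xs →
      ∀ k ω, xs k ω ∈ C → vs k ω ∈ K → xs (k + 1) ω ∈ C' := by
  set D := cthickening ε C ∩ X
  have hD : IsCompact D := hC.cthickening.inter_right hX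
  set B := ⋃ x ∈ D, ⋃ γ ∈ Ioo (0:ℝ) 1, Ufb P X U f vs v ℓ η γ x
  set K2 := cthickening ε B ∩ U
  have hK2 : IsCompact K2 := (isCompact_of_isClosed_isBounded isClosed_cthickening
    (hUlocb D inter_subset_right hD).cthickening).inter_right hU
  refine ⟨cthickening ε {y | ∃ x ∈ D, ∃ u ∈ K2, ∃ w ∈ K, y = f x u w},
    isCompact_of_isClosed_isBounded isClosed_cthickening
      (hflocb D inter_subset_right K2 inter_subset_right K hKVs hD hK2 hK).cthickening, ?_⟩
  intro γ hγ x0 xs hxs k ω hxk hvk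
  obtain ⟨u, p1, p2, p3, p4, -, -, -, -, -, hp1, hp2, hp3, hp4, hu, hfb, hnext⟩ := hxs.2.2 k
  have hfbB : u ω - p3 ω ∈ B := mem_biUnion ⟨add_mem_cthickening hxk (hp2 ω).le, (hfb ω).1⟩
    (mem_biUnion hγ (hfb ω).2)
  have huK2 : u ω ∈ K2 :=
    ⟨by simpa using add_mem_cthickening hfbB (hp3 ω).le, hu ω⟩
  rw [(hnext ω).2]
  exact add_mem_cthickening
    ⟨_, ⟨add_mem_cthickening hxk (hp1 ω).le, (hnext ω).1⟩, _, huK2, _, hvk, rfl⟩ (hp4 ω).le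

theorem exists_isCompact_forall_isPertSCSol_mem (hX : IsClosed X) (hU : IsClosed U)
    (hflocb : ∀ K1 ⊆ X, ∀ K2 ⊆ U, ∀ K3 ⊆ Vs, IsCompact K1 → IsCompact K2 → IsCompact K3 →
      IsBounded {y | ∃ x ∈ K1, ∃ u ∈ K2, ∃ w ∈ K3, y = f x u w})
    (hUlocb : ∀ D ⊆ X, IsCompact D →
      IsBounded (⋃ x ∈ D, ⋃ γ ∈ Ioo (0:ℝ) 1, Ufb P X U f vs v ℓ η γ x))
    (hK : IsCompact K) (hKVs : K ⊆ Vs) {C0 : Set (Euc n)} (hC0 : IsCompact C0) (T : ℕ) :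
    ∃ C, IsCompact C ∧ ∀ γ ∈ Ioo (0:ℝ) 1, ∀ x0 ∈ C0, ∀ xs,
      IsPertSCSol P X U f vs v ℓ η γ ε x0 xs →
        ∀ ω, (∀ j < T, vs j ω ∈ K) → ∀ k ≤ T, xs k ω ∈ C := by
  induction T with
  | zero =>
    refine ⟨C0, hC0, fun γ _ x0 hx0 xs hxs ω _ k hk => ?_⟩
    rw [Nat.le_zero.1 hk, hxs.2.1 ω]
    exact hx0
  | succ T ih =>
    obtain ⟨C, hC, hmem⟩ := ih
    obtain ⟨C', hC', hstep⟩ :=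
      exists_isCompact_forall_isPertSCSol_succ_mem (ε := ε) hX hU hflocb hUlocb hK hKVs hC
    refine ⟨C ∪ C', hC.union hC', fun γ hγ x0 hx0 xs hxs ω hω k hk => ?_⟩
    have hxT := hmem γ hγ x0 hx0 xs hxs ω fun j hj => hω j (Nat.lt_succ_of_lt hj)
    rcases Nat.of_le_succ hk with hk | rfl
    · exact Or.inl (hxT k hk)
    · exact Or.inr (hstep γ hγ x0 xs hxs T ω (hxT T le_rfl) (hω T T.lt_succ_self))

end PerturbedSolution

theorem robust_boundedness_with_high_probability_general
    (n m q : ℕ) (Ω : Type) [MeasurableSpace Ω] (P : Measure Ω) [IsProbabilityMeasure P]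
    (X : Set (Euc n)) (U : Set (Euc m)) (Vs : Set (Euc q))
    (hX : IsClosed X) (hU : IsClosed U) (hVs : MeasurableSet Vs)
    (f : Euc n → Euc m → Euc q → Euc n)
    (v : Ω → Euc q) (vs : ℕ → Ω → Euc q)
    (hvsmeas : ∀ k, Measurable (vs k)) (hvsmem : ∀ k ω, vs k ω ∈ Vs)
    (ℓ : Euc n → Euc m → ℝ)
    (η : Euc n → ℝ)
    -- state-space measure `σ`
    (σ : Euc n → ℝ) (hσnn : ∀ x, 0 ≤ σ x)
    (hσlocb : ∀ K ⊆ X, IsCompact K → Bornology.IsBounded (σ '' K))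
    (hσru : ∀ B : Set ℝ, Bornology.IsBounded B → Bornology.IsBounded {x ∈ X | σ x ∈ B})
    -- Assumption 3: `f` and `U_{(0,1)}^η` are locally bounded
    (hflocb : ∀ K1 ⊆ X, ∀ K2 ⊆ U, ∀ K3 ⊆ Vs, IsCompact K1 → IsCompact K2 → IsCompact K3 →
      Bornology.IsBounded {y | ∃ x ∈ K1, ∃ u ∈ K2, ∃ w ∈ K3, y = f x u w})
    (hUlocb : ∀ D ⊆ X, IsCompact D →
      Bornology.IsBounded (⋃ x ∈ D, ⋃ γ ∈ Ioo (0:ℝ) 1, Ufb P X U f vs v ℓ η γ x))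
    :
    ∀ Δ0 > (0:ℝ), ∀ p > (0:ℝ), ∀ T : ℕ, ∃ Δ > (0:ℝ), ∃ ε > (0:ℝ),
      ∀ γ ∈ Ioo (0:ℝ) 1, ∀ x0 ∈ X, σ x0 < Δ0 →
        ∀ xs : ℕ → Ω → Euc n, IsPertSCSol P X U f vs v ℓ η γ ε x0 xs →
          P {ω | ∀ k ≤ T, σ (xs k ω) < Δ} > ENNReal.ofReal (1 - p) := by
  intro Δ0 _ p hp T
  have hlt_univ : ENNReal.ofReal (1 - p) < P univ := by
    rw [measure_univ]
    exact ENNReal.ofReal_lt_one.2 (by linarith)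
  obtain ⟨K, hKVs, hK, hPK⟩ :=
    exists_isCompact_lt_measure_forall_lt_mem P hvsmeas hVs hvsmem T hlt_univ
  have hC0 : IsCompact (closure {x ∈ X | σ x < Δ0}) :=
    ((hσru (Icc 0 Δ0) (isBounded_Icc 0 Δ0)).subset
      fun x hx => ⟨hx.1, hσnn x, hx.2.le⟩).isCompact_closure
  obtain ⟨C, hC, hxsC⟩ :=
    exists_isCompact_forall_isPertSCSol_mem (ε := 1) hX hU hflocb hUlocb hK hKVs hC0 T
  obtain ⟨M, hM⟩ := (hσlocb (C ∩ X) inter_subset_right (hC.inter_right hX)).bddAbove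
  refine ⟨max M 0 + 1, by positivity, 1, one_pos, fun γ hγ x0 hx0 hσx0 xs hxs => ?_⟩
  refine hPK.trans_le (measure_mono fun ω hω k hk => ?_)
  have hσM : σ (xs k ω) ≤ M :=
    hM ⟨_, ⟨hxsC γ hγ x0 (subset_closure ⟨hx0, hσx0⟩) xs hxs ω hω k hk, hxs.1 k ω⟩, rfl⟩
  linarith [le_max_left M 0]

theorem robust_boundedness_with_high_probability
    (n m q : ℕ) (Ω : Type) [MeasurableSpace Ω] (P : Measure Ω) [IsProbabilityMeasure P]
    (X : Set (Euc n)) (U : Set (Euc m)) (Vs : Set (Euc q))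
    (hX : IsClosed X) (hU : IsClosed U) (hVs : MeasurableSet Vs)
    (f : Euc n → Euc m → Euc q → Euc n)
    (hfmaps : ∀ x ∈ X, ∀ u ∈ U, ∀ w ∈ Vs, f x u w ∈ X)
    (v : Ω → Euc q) (vs : ℕ → Ω → Euc q)
    (hv : Measurable v) (hvmem : ∀ ω, v ω ∈ Vs)
    (hvsmeas : ∀ k, Measurable (vs k)) (hvsmem : ∀ k ω, vs k ω ∈ Vs)
    (hiid : ProbabilityTheory.iIndepFun vs P)
    (hident : ∀ k, Measure.map (vs k) P = Measure.map v P)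
    (ℓ : Euc n → Euc m → ℝ) (hℓnn : ∀ x u, 0 ≤ ℓ x u)
    (η : Euc n → ℝ) (hηnn : ∀ x, 0 ≤ η x)
    -- Assumption 1 (measurability; `V_γ` finite and measurable)
    (hfmeas : Measurable fun p : Euc n × Euc m × Euc q => f p.1 p.2.1 p.2.2)
    (hℓmeas : Measurable fun p : Euc n × Euc m => ℓ p.1 p.2)
    (hηmeas : Measurable η)
    (hVfin : ∀ γ ∈ Ioo (0:ℝ) 1, ∀ x ∈ X, evalue P X U f vs ℓ γ x ≠ ⊤)
    (hVmeas : ∀ γ ∈ Ioo (0:ℝ) 1, Measurable (value P X U f vs ℓ γ))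
    -- state-space measure `σ`
    (σ : Euc n → ℝ) (hσnn : ∀ x, 0 ≤ σ x) (hσmeas : Measurable σ)
    (hσlocb : ∀ K ⊆ X, IsCompact K → Bornology.IsBounded (σ '' K))
    (hσru : ∀ B : Set ℝ, Bornology.IsBounded B → Bornology.IsBounded {x ∈ X | σ x ∈ B})
    -- Assumption 2(i): cost-controllability with lower bound
    (αV : ℝ → ℝ) (hαV : IsKInfty αV)
    (e1 e2 : ℝ) (he1 : 0 ≤ e1) (he2 : 0 ≤ e2)
    (cγ : ℝ → ℝ) (hcγnn : ∀ γ ∈ Ioo (0:ℝ) 1, 0 ≤ cγ γ)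
    (hcc : ∀ γ ∈ Ioo (0:ℝ) 1, ∀ x ∈ X,
      -e1 ≤ value P X U f vs ℓ γ x - cγ γ / (1 - γ) ∧
        value P X U f vs ℓ γ x - cγ γ / (1 - γ) ≤ e2 + αV (σ x))
    (c : ℝ) (hcnn : 0 ≤ c) (hcbd : ∀ γ ∈ Ioo (0:ℝ) 1, cγ γ ≤ c)
    -- Assumption 2(ii): detectability
    (W : Euc n → ℝ) (hWnn : ∀ x, 0 ≤ W x) (hWmeas : Measurable W)
    (αWu αWl : ℝ → ℝ) (hαWu : IsKInfty αWu) (hαWl : IsKInfty αWl)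
    (d : ℝ) (hd : 0 < d)
    (hWub : ∀ x ∈ X, W x ≤ αWu (σ x))
    (hdet : ∀ x ∈ X, ∀ u ∈ U,
      (∫ ω, W (f x u (v ω)) ∂P) - W x ≤ -αWl (σ x) + ℓ x u + d)
    -- Assumption 3: `f` and `U_{(0,1)}^η` are locally bounded
    (hflocb : ∀ K1 ⊆ X, ∀ K2 ⊆ U, ∀ K3 ⊆ Vs, IsCompact K1 → IsCompact K2 → IsCompact K3 →
      Bornology.IsBounded {y | ∃ x ∈ K1, ∃ u ∈ K2, ∃ w ∈ K3, y = f x u w})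
    (hUlocb : ∀ D ⊆ X, IsCompact D →
      Bornology.IsBounded (⋃ x ∈ D, ⋃ γ ∈ Ioo (0:ℝ) 1, Ufb P X U f vs v ℓ η γ x))
    -- Assumption 4: continuity
    (hℓcont : Continuous fun p : Euc n × Euc m => ℓ p.1 p.2)
    (hσcont : Continuous σ) (hηcont : Continuous η)
    (hfcont : ∀ w, Continuous fun p : Euc n × Euc m => f p.1 p.2 w)
    (hVequi : ∀ ε > 0, ∀ x : Euc n, ∃ δ > 0, ∀ y : Euc n, ‖x - y‖ < δ →
      ∀ γ ∈ Ioo (0:ℝ) 1, |value P X U f vs ℓ γ x - value P X U f vs ℓ γ y| < ε)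
    (hEVequi : ∀ ε > 0, ∀ p : Euc n × Euc m, ∃ δ > 0, ∀ p' : Euc n × Euc m, ‖p - p'‖ < δ →
      ∀ γ ∈ Ioo (0:ℝ) 1,
        |expValNext P X U f vs v ℓ γ p.1 p.2 - expValNext P X U f vs v ℓ γ p'.1 p'.2| < ε)
    (hWcont : Continuous W)
    :
    ∀ Δ0 > (0:ℝ), ∀ p > (0:ℝ), ∀ T : ℕ, ∃ Δ > (0:ℝ), ∃ ε > (0:ℝ),
      ∀ γ ∈ Ioo (0:ℝ) 1, ∀ x0 ∈ X, σ x0 < Δ0 →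
        ∀ xs : ℕ → Ω → Euc n, IsPertSCSol P X U f vs v ℓ η γ ε x0 xs →
          P {ω | ∀ k ≤ T, σ (xs k ω) < Δ} > ENNReal.ofReal (1 - p) :=
  robust_boundedness_with_high_probability_general n m q Ω P X U Vs hX hU hVs f v vs hvsmeas hvsmem
    ℓ η σ hσnn hσlocb hσru hflocb hUlocb
end
end

section
/- Under Assumptions 1 and 2, define Y_γ(x) := V_γ(x) + W(x)/γ − γc_γ/(1−γ) + d + e₁, ᾱ_Y := ᾱ_V + 2ᾱ_W and e := e₁ + e₂. Then for every γ ∈ [1/2, 1) and every x ∈ 𝒳: α_W(σ(x)) ≤ Y_γ(x) ≤ ᾱ_Y(σ(x)) + c + d + e. (Sandwich bounds for the Lyapunov-like function Y_γ.) -/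
open MeasureTheory Set Filter
open scoped ENNReal NNReal

noncomputable section

variable {𝕏 𝕌 𝕍 Ω : Type*}

/-! The upper bound is arithmetic: cost-controllability bounds `V_γ`, `W ≤ ᾱ_W ∘ σ`,
`W / γ ≤ 2 W` for `γ ≥ 1/2`, and `c_γ/(1-γ) - γ c_γ/(1-γ) = c_γ ≤ c`.

For the lower bound, the cost of a measurable policy satisfies the Bellman identity
`J_γ(x,h) = ℓ(x,h(x)) + γ E[J_γ(f(x,h(x),v),h)]`, because `v_0` is independent of the shifted
sequence `(v_{k+1})_k`, which has the same law as `(v_k)_k`. Bounding `J_γ ≥ V_γ ≥ c_γ/(1-γ) - e₁`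
at the successor state, an `ε`-optimal policy yields `u ∈ 𝒰` with
`ℓ(x,u) + γ (c_γ/(1-γ) - e₁) ≤ V_γ(x) + ε`, and detectability with `E[W] ≥ 0` gives
`α_W(σ(x)) ≤ W(x) + ℓ(x,u) + d`. -/

namespace ProbabilityTheory

variable [MeasurableSpace Ω] [MeasurableSpace 𝕍]

lemma iIndepFun.indepFun_head_tail {P : Measure Ω} {vs : ℕ → Ω → 𝕍}
    (hvs : ∀ k, Measurable (vs k)) (hiid : iIndepFun vs P) :
    IndepFun (vs 0) (fun ω k => vs (k + 1) ω) P := by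
  set m : ℕ → MeasurableSpace Ω := fun k => MeasurableSpace.comap (vs k) inferInstance
  have hindep : Indep (⨆ k ∈ ({0} : Set ℕ), m k) (⨆ k ∈ Ioi 0, m k) P :=
    indep_iSup_of_disjoint (fun k => (hvs k).comap_le) ((iIndepFun_iff_iIndep _ _ _).mp hiid)
      (by simp)
  have htail : Measurable[⨆ k ∈ Ioi 0, m k] fun ω k => vs (k + 1) ω :=
    @measurable_pi_lambda _ _ _ (⨆ k ∈ Ioi 0, m k) _ _ fun k =>
      Measurable.of_comap_le (le_iSup₂ (f := fun k (_ : k ∈ Ioi 0) => m k) (k + 1) k.succ_pos)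
  rw [IndepFun_iff_Indep]
  exact indep_of_indep_of_le_right (indep_of_indep_of_le_left hindep
    (le_iSup₂ (f := fun k (_ : k ∈ ({0} : Set ℕ)) => m k) 0 rfl)) htail.comap_le

lemma iIndepFun.map_tail_eq_map {P : Measure Ω} {v : Ω → 𝕍} {vs : ℕ → Ω → 𝕍}
    (hvs : ∀ k, Measurable (vs k)) (hiid : iIndepFun vs P)
    (hident : ∀ k, P.map (vs k) = P.map v) :
    P.map (fun ω k => vs (k + 1) ω) = P.map (fun ω k => vs k ω) := by
  rw [(hiid.precomp Nat.succ_injective).map_fun_eq_infinitePi_map (fun k => hvs _),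
    hiid.map_fun_eq_infinitePi_map hvs]
  simp only [hident]

lemma iIndepFun.map_head_tail_eq_prod {P : Measure Ω} [IsProbabilityMeasure P] {v : Ω → 𝕍}
    {vs : ℕ → Ω → 𝕍} (hvs : ∀ k, Measurable (vs k)) (hiid : iIndepFun vs P)
    (hident : ∀ k, P.map (vs k) = P.map v) :
    P.map (fun ω => (vs 0 ω, fun k => vs (k + 1) ω))
      = (P.map v).prod (P.map fun ω k => vs k ω) := by
  rw [(indepFun_iff_map_prod_eq_prod_map_map (hvs 0).aemeasurable
    (measurable_pi_lambda _ fun k => hvs _).aemeasurable).mp (hiid.indepFun_head_tail hvs),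
    hident, hiid.map_tail_eq_map hvs hident]

lemma iIndepFun.lintegral_head_tail {P : Measure Ω} [IsProbabilityMeasure P] {v : Ω → 𝕍}
    {vs : ℕ → Ω → 𝕍} (hv : Measurable v) (hvs : ∀ k, Measurable (vs k)) (hiid : iIndepFun vs P)
    (hident : ∀ k, P.map (vs k) = P.map v) {G : 𝕍 × (ℕ → 𝕍) → ℝ≥0∞} (hG : Measurable G) :
    ∫⁻ ω, G (vs 0 ω, fun k => vs (k + 1) ω) ∂P
      = ∫⁻ ω, ∫⁻ ω', G (v ω, fun k => vs k ω') ∂P ∂P := by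
  have hseq : Measurable fun ω k => vs k ω := measurable_pi_lambda _ hvs
  have hhead_tail : Measurable fun ω => (vs 0 ω, fun k => vs (k + 1) ω) :=
    (hvs 0).prodMk (measurable_pi_lambda _ fun k => hvs _)
  rw [← lintegral_map hG hhead_tail, hiid.map_head_tail_eq_prod hvs hident,
    lintegral_prod _ hG.aemeasurable, lintegral_map hG.lintegral_prod_right' hv]
  exact lintegral_congr fun ω => lintegral_map (hG.comp measurable_prodMk_left) hseq

end ProbabilityTheory

def pathTraj (f : 𝕏 → 𝕌 → 𝕍 → 𝕏) (h : 𝕏 → 𝕌) (x : 𝕏) (w : ℕ → 𝕍) : ℕ → 𝕏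
  | 0 => x
  | k + 1 => f (pathTraj f h x w k) (h (pathTraj f h x w k)) (w k)

lemma traj_eq_pathTraj (f : 𝕏 → 𝕌 → 𝕍 → 𝕏) (vs : ℕ → Ω → 𝕍) (h : 𝕏 → 𝕌) (x : 𝕏) (k : ℕ)
    (ω : Ω) : traj f vs h x k ω = pathTraj f h x (fun j => vs j ω) k := by
  induction k with
  | zero => rfl
  | succ k ih => simp only [traj, pathTraj, ih]

lemma pathTraj_succ (f : 𝕏 → 𝕌 → 𝕍 → 𝕏) (h : 𝕏 → 𝕌) (x : 𝕏) (w : ℕ → 𝕍) (k : ℕ) :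
    pathTraj f h x w (k + 1) = pathTraj f h (f x (h x) (w 0)) (fun j => w (j + 1)) k := by
  induction k with
  | zero => rfl
  | succ k ih => rw [pathTraj, ih]; rfl

def pathCost (f : 𝕏 → 𝕌 → 𝕍 → 𝕏) (ℓ : 𝕏 → 𝕌 → ℝ) (γ : ℝ) (h : 𝕏 → 𝕌) (x : 𝕏)
    (w : ℕ → 𝕍) : ℝ≥0∞ :=
  ∑' k, ENNReal.ofReal (γ ^ k * ℓ (pathTraj f h x w k) (h (pathTraj f h x w k)))

lemma pathCost_eq_add {f : 𝕏 → 𝕌 → 𝕍 → 𝕏} {ℓ : 𝕏 → 𝕌 → ℝ} {γ : ℝ} (hγ : 0 ≤ γ)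
    (h : 𝕏 → 𝕌) (x : 𝕏) (w : ℕ → 𝕍) :
    pathCost f ℓ γ h x w = ENNReal.ofReal (ℓ x (h x))
      + ENNReal.ofReal γ * pathCost f ℓ γ h (f x (h x) (w 0)) (fun j => w (j + 1)) := by
  rw [pathCost, tsum_eq_zero_add' ENNReal.summable, pathCost, ← ENNReal.tsum_mul_left]
  congr 1
  · simp [pathTraj]
  · refine tsum_congr fun k => ?_
    rw [← ENNReal.ofReal_mul hγ, pathTraj_succ, pow_succ', mul_assoc]

lemma cost_eq_lintegral_pathCost [MeasurableSpace Ω] (P : Measure Ω) (f : 𝕏 → 𝕌 → 𝕍 → 𝕏)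
    (vs : ℕ → Ω → 𝕍) (ℓ : 𝕏 → 𝕌 → ℝ) (γ : ℝ) (x : 𝕏) (h : 𝕏 → 𝕌) :
    cost P f vs ℓ γ x h = ∫⁻ ω, pathCost f ℓ γ h x (fun j => vs j ω) ∂P := by
  simp only [cost, pathCost, traj_eq_pathTraj]

section DiscountedCost

open ProbabilityTheory

variable [MeasurableSpace 𝕏] [MeasurableSpace 𝕌] [MeasurableSpace 𝕍] [MeasurableSpace Ω]
  {P : Measure Ω} {X : Set 𝕏} {U : Set 𝕌} {Vs : Set 𝕍} {f : 𝕏 → 𝕌 → 𝕍 → 𝕏} {v : Ω → 𝕍}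
  {vs : ℕ → Ω → 𝕍} {ℓ : 𝕏 → 𝕌 → ℝ} {γ : ℝ} {x : 𝕏}

lemma measurable_pathTraj {h : 𝕏 → 𝕌} (hf : Measurable fun p : 𝕏 × 𝕌 × 𝕍 => f p.1 p.2.1 p.2.2)
    (hh : Measurable h) (k : ℕ) :
    Measurable fun p : 𝕏 × (ℕ → 𝕍) => pathTraj f h p.1 p.2 k := by
  induction k with
  | zero => exact measurable_fst
  | succ k ih =>
    exact hf.comp (ih.prodMk ((hh.comp ih).prodMk ((measurable_pi_apply k).comp measurable_snd)))

lemma measurable_pathCost {h : 𝕏 → 𝕌} (hf : Measurable fun p : 𝕏 × 𝕌 × 𝕍 => f p.1 p.2.1 p.2.2)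
    (hh : Measurable h) (hℓ : Measurable fun p : 𝕏 × 𝕌 => ℓ p.1 p.2) :
    Measurable fun p : 𝕏 × (ℕ → 𝕍) => pathCost f ℓ γ h p.1 p.2 :=
  Measurable.tsum fun k => ENNReal.measurable_ofReal.comp (measurable_const.mul
    (hℓ.comp ((measurable_pathTraj hf hh k).prodMk (hh.comp (measurable_pathTraj hf hh k)))))

theorem cost_eq_add_lintegral_cost [IsProbabilityMeasure P] {h : 𝕏 → 𝕌}
    (hf : Measurable fun p : 𝕏 × 𝕌 × 𝕍 => f p.1 p.2.1 p.2.2)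
    (hℓ : Measurable fun p : 𝕏 × 𝕌 => ℓ p.1 p.2) (hh : Measurable h) (hv : Measurable v)
    (hvs : ∀ k, Measurable (vs k)) (hiid : iIndepFun vs P)
    (hident : ∀ k, P.map (vs k) = P.map v) (hγ : 0 ≤ γ) :
    cost P f vs ℓ γ x h = ENNReal.ofReal (ℓ x (h x))
      + ENNReal.ofReal γ * ∫⁻ ω, cost P f vs ℓ γ (f x (h x) (v ω)) h ∂P := by
  have hG : Measurable fun p : 𝕍 × (ℕ → 𝕍) => pathCost f ℓ γ h (f x (h x) p.1) p.2 :=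
    (measurable_pathCost hf hh hℓ).comp
      ((hf.comp (measurable_const.prodMk (measurable_const.prodMk measurable_fst))).prodMk
        measurable_snd)
  have hG_tail : Measurable fun ω =>
      pathCost f ℓ γ h (f x (h x) (vs 0 ω)) fun k => vs (k + 1) ω :=
    hG.comp ((hvs 0).prodMk (measurable_pi_lambda _ fun k => hvs _))
  simp only [cost_eq_lintegral_pathCost, pathCost_eq_add hγ h x]
  rw [lintegral_add_left measurable_const, lintegral_const, measure_univ, mul_one,
    lintegral_const_mul _ hG_tail, hiid.lintegral_head_tail hv hvs hident hG]

theorem stage_cost_add_le_cost [IsProbabilityMeasure P]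
    (hf : Measurable fun p : 𝕏 × 𝕌 × 𝕍 => f p.1 p.2.1 p.2.2)
    (hℓ : Measurable fun p : 𝕏 × 𝕌 => ℓ p.1 p.2) (hv : Measurable v)
    (hvs : ∀ k, Measurable (vs k)) (hiid : iIndepFun vs P)
    (hident : ∀ k, P.map (vs k) = P.map v) (hγ : 0 ≤ γ)
    (hfmaps : ∀ x ∈ X, ∀ u ∈ U, ∀ w ∈ Vs, f x u w ∈ X) (hvmem : ∀ ω, v ω ∈ Vs)
    {t : ℝ≥0∞} (ht : ∀ y ∈ X, t ≤ evalue P X U f vs ℓ γ y) (hx : x ∈ X)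
    {h : 𝕏 → 𝕌} (hh : Measurable h) (hhU : MapsTo h X U) :
    ENNReal.ofReal (ℓ x (h x)) + ENNReal.ofReal γ * t ≤ cost P f vs ℓ γ x h := by
  rw [cost_eq_add_lintegral_cost hf hℓ hh hv hvs hiid hident hγ]
  gcongr
  calc t = ∫⁻ _, t ∂P := by rw [lintegral_const, measure_univ, mul_one]
    _ ≤ ∫⁻ ω, cost P f vs ℓ γ (f x (h x) (v ω)) h ∂P := lintegral_mono fun ω =>
      (ht _ (hfmaps x hx _ (hhU hx) _ (hvmem ω))).trans (iInf_le_of_le ⟨h, hh, hhU⟩ le_rfl)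

theorem exists_stage_cost_add_le_value [IsProbabilityMeasure P]
    (hf : Measurable fun p : 𝕏 × 𝕌 × 𝕍 => f p.1 p.2.1 p.2.2)
    (hℓ : Measurable fun p : 𝕏 × 𝕌 => ℓ p.1 p.2) (hv : Measurable v)
    (hvs : ∀ k, Measurable (vs k)) (hiid : iIndepFun vs P)
    (hident : ∀ k, P.map (vs k) = P.map v) (hγ : 0 ≤ γ)
    (hfmaps : ∀ x ∈ X, ∀ u ∈ U, ∀ w ∈ Vs, f x u w ∈ X) (hvmem : ∀ ω, v ω ∈ Vs)
    (hVfin : ∀ y ∈ X, evalue P X U f vs ℓ γ y ≠ ⊤)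
    {t : ℝ} (ht : ∀ y ∈ X, t ≤ value P X U f vs ℓ γ y) (hx : x ∈ X) {ε : ℝ} (hε : 0 < ε) :
    ∃ u ∈ U, ℓ x u + γ * t ≤ value P X U f vs ℓ γ x + ε := by
  have ht' : ∀ y ∈ X, ENNReal.ofReal t ≤ evalue P X U f vs ℓ γ y := fun y hy =>
    (ENNReal.ofReal_le_ofReal (ht y hy)).trans_eq (ENNReal.ofReal_toReal (hVfin y hy))
  obtain ⟨⟨h, hh, hhU⟩, hh_opt⟩ := iInf_lt_iff.mp (ENNReal.lt_add_right (hVfin x hx)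
    (ENNReal.ofReal_pos.mpr hε).ne')
  refine ⟨h x, hhU hx, (ENNReal.ofReal_le_ofReal_iff
    (add_nonneg ENNReal.toReal_nonneg hε.le)).mp ?_⟩
  calc ENNReal.ofReal (ℓ x (h x) + γ * t)
      ≤ ENNReal.ofReal (ℓ x (h x)) + ENNReal.ofReal γ * ENNReal.ofReal t := by
        rw [← ENNReal.ofReal_mul hγ]; exact ENNReal.ofReal_add_le
    _ ≤ cost P f vs ℓ γ x h :=
        stage_cost_add_le_cost hf hℓ hv hvs hiid hident hγ hfmaps hvmem ht' hx hh hhU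
    _ ≤ evalue P X U f vs ℓ γ x + ENNReal.ofReal ε := hh_opt.le
    _ = ENNReal.ofReal (value P X U f vs ℓ γ x + ε) := by
        rw [value, ENNReal.ofReal_add ENNReal.toReal_nonneg hε.le,
          ENNReal.ofReal_toReal (hVfin x hx)]

end DiscountedCost

theorem lyapunov_sandwich_bounds_general
    (n m q : ℕ) (Ω : Type) [MeasurableSpace Ω] (P : Measure Ω) [IsProbabilityMeasure P]
    (X : Set (Euc n)) (U : Set (Euc m)) (Vs : Set (Euc q))
    (f : Euc n → Euc m → Euc q → Euc n)
    (hfmaps : ∀ x ∈ X, ∀ u ∈ U, ∀ w ∈ Vs, f x u w ∈ X)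
    (v : Ω → Euc q) (vs : ℕ → Ω → Euc q)
    (hv : Measurable v) (hvmem : ∀ ω, v ω ∈ Vs)
    (hvsmeas : ∀ k, Measurable (vs k))
    (hiid : ProbabilityTheory.iIndepFun vs P)
    (hident : ∀ k, Measure.map (vs k) P = Measure.map v P)
    (ℓ : Euc n → Euc m → ℝ)
    -- Assumption 1 (measurability; `V_γ` finite and measurable)
    (hfmeas : Measurable fun p : Euc n × Euc m × Euc q => f p.1 p.2.1 p.2.2)
    (hℓmeas : Measurable fun p : Euc n × Euc m => ℓ p.1 p.2)
    (hVfin : ∀ γ ∈ Ioo (0:ℝ) 1, ∀ x ∈ X, evalue P X U f vs ℓ γ x ≠ ⊤)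
    -- state-space measure `σ`
    (σ : Euc n → ℝ)
    -- Assumption 2(i): cost-controllability with lower bound
    (αV : ℝ → ℝ)
    (e1 e2 : ℝ) (he1 : 0 ≤ e1)
    (cγ : ℝ → ℝ)
    (hcc : ∀ γ ∈ Ioo (0:ℝ) 1, ∀ x ∈ X,
      -e1 ≤ value P X U f vs ℓ γ x - cγ γ / (1 - γ) ∧
        value P X U f vs ℓ γ x - cγ γ / (1 - γ) ≤ e2 + αV (σ x))
    (c : ℝ) (hcbd : ∀ γ ∈ Ioo (0:ℝ) 1, cγ γ ≤ c)
    -- Assumption 2(ii): detectability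
    (W : Euc n → ℝ) (hWnn : ∀ x, 0 ≤ W x)
    (αWu αWl : ℝ → ℝ)
    (d : ℝ)
    (hWub : ∀ x ∈ X, W x ≤ αWu (σ x))
    (hdet : ∀ x ∈ X, ∀ u ∈ U,
      (∫ ω, W (f x u (v ω)) ∂P) - W x ≤ -αWl (σ x) + ℓ x u + d)
    :
    ∀ γ ∈ Ico (1/2 : ℝ) 1, ∀ x ∈ X,
      αWl (σ x) ≤
          value P X U f vs ℓ γ x + W x / γ - γ * cγ γ / (1 - γ) + d + e1 ∧
        value P X U f vs ℓ γ x + W x / γ - γ * cγ γ / (1 - γ) + d + e1 ≤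
          (αV (σ x) + 2 * αWu (σ x)) + c + d + (e1 + e2) := by
  intro γ hγ x hx
  have hγ0 : 0 < γ := by linarith [hγ.1]
  have hγ' : γ ∈ Ioo (0 : ℝ) 1 := ⟨hγ0, hγ.2⟩
  constructor
  · refine le_of_forall_pos_le_add fun ε hε => ?_
    obtain ⟨u, hu, hℓu⟩ := exists_stage_cost_add_le_value hfmeas hℓmeas hv hvsmeas hiid hident
      hγ0.le hfmaps hvmem (hVfin γ hγ') (t := cγ γ / (1 - γ) - e1)
      (fun y hy => by linarith [(hcc γ hγ' y hy).1]) hx hε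
    have hEW : 0 ≤ ∫ ω, W (f x u (v ω)) ∂P := integral_nonneg fun ω => hWnn _
    have hW_div : W x ≤ W x / γ := le_div_self (hWnn x) hγ0 hγ.2.le
    have hγe1 : γ * e1 ≤ e1 := mul_le_of_le_one_left he1 hγ.2.le
    have hexpand : γ * (cγ γ / (1 - γ) - e1) = γ * cγ γ / (1 - γ) - γ * e1 := by ring
    linarith [hdet x hx u hu]
  · have hW_div : W x / γ ≤ 2 * W x := by
      rw [div_le_iff₀ hγ0]; nlinarith [hWnn x, hγ.1]
    have hc_split : cγ γ / (1 - γ) - γ * cγ γ / (1 - γ) = cγ γ := by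
      field_simp [(sub_pos.mpr hγ.2).ne']
    linarith [(hcc γ hγ' x hx).2, hWub x hx, hcbd γ hγ']

theorem lyapunov_sandwich_bounds
    (n m q : ℕ) (Ω : Type) [MeasurableSpace Ω] (P : Measure Ω) [IsProbabilityMeasure P]
    (X : Set (Euc n)) (U : Set (Euc m)) (Vs : Set (Euc q))
    (hX : IsClosed X) (hU : IsClosed U) (hVs : MeasurableSet Vs)
    (f : Euc n → Euc m → Euc q → Euc n)
    (hfmaps : ∀ x ∈ X, ∀ u ∈ U, ∀ w ∈ Vs, f x u w ∈ X)
    (v : Ω → Euc q) (vs : ℕ → Ω → Euc q)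
    (hv : Measurable v) (hvmem : ∀ ω, v ω ∈ Vs)
    (hvsmeas : ∀ k, Measurable (vs k)) (hvsmem : ∀ k ω, vs k ω ∈ Vs)
    (hiid : ProbabilityTheory.iIndepFun vs P)
    (hident : ∀ k, Measure.map (vs k) P = Measure.map v P)
    (ℓ : Euc n → Euc m → ℝ) (hℓnn : ∀ x u, 0 ≤ ℓ x u)
    (η : Euc n → ℝ) (hηnn : ∀ x, 0 ≤ η x)
    -- Assumption 1 (measurability; `V_γ` finite and measurable)
    (hfmeas : Measurable fun p : Euc n × Euc m × Euc q => f p.1 p.2.1 p.2.2)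
    (hℓmeas : Measurable fun p : Euc n × Euc m => ℓ p.1 p.2)
    (hηmeas : Measurable η)
    (hVfin : ∀ γ ∈ Ioo (0:ℝ) 1, ∀ x ∈ X, evalue P X U f vs ℓ γ x ≠ ⊤)
    (hVmeas : ∀ γ ∈ Ioo (0:ℝ) 1, Measurable (value P X U f vs ℓ γ))
    -- state-space measure `σ`
    (σ : Euc n → ℝ) (hσnn : ∀ x, 0 ≤ σ x) (hσmeas : Measurable σ)
    (hσlocb : ∀ K ⊆ X, IsCompact K → Bornology.IsBounded (σ '' K))
    (hσru : ∀ B : Set ℝ, Bornology.IsBounded B → Bornology.IsBounded {x ∈ X | σ x ∈ B})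
    -- Assumption 2(i): cost-controllability with lower bound
    (αV : ℝ → ℝ) (hαV : IsKInfty αV)
    (e1 e2 : ℝ) (he1 : 0 ≤ e1) (he2 : 0 ≤ e2)
    (cγ : ℝ → ℝ) (hcγnn : ∀ γ ∈ Ioo (0:ℝ) 1, 0 ≤ cγ γ)
    (hcc : ∀ γ ∈ Ioo (0:ℝ) 1, ∀ x ∈ X,
      -e1 ≤ value P X U f vs ℓ γ x - cγ γ / (1 - γ) ∧
        value P X U f vs ℓ γ x - cγ γ / (1 - γ) ≤ e2 + αV (σ x))
    (c : ℝ) (hcnn : 0 ≤ c) (hcbd : ∀ γ ∈ Ioo (0:ℝ) 1, cγ γ ≤ c)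
    -- Assumption 2(ii): detectability
    (W : Euc n → ℝ) (hWnn : ∀ x, 0 ≤ W x) (hWmeas : Measurable W)
    (αWu αWl : ℝ → ℝ) (hαWu : IsKInfty αWu) (hαWl : IsKInfty αWl)
    (d : ℝ) (hd : 0 < d)
    (hWub : ∀ x ∈ X, W x ≤ αWu (σ x))
    (hdet : ∀ x ∈ X, ∀ u ∈ U,
      (∫ ω, W (f x u (v ω)) ∂P) - W x ≤ -αWl (σ x) + ℓ x u + d)
    :
    ∀ γ ∈ Ico (1/2 : ℝ) 1, ∀ x ∈ X,
      αWl (σ x) ≤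
          value P X U f vs ℓ γ x + W x / γ - γ * cγ γ / (1 - γ) + d + e1 ∧
        value P X U f vs ℓ γ x + W x / γ - γ * cγ γ / (1 - γ) + d + e1 ≤
          (αV (σ x) + 2 * αWu (σ x)) + c + d + (e1 + e2) :=
  lyapunov_sandwich_bounds_general n m q Ω P X U Vs f hfmaps v vs hv hvmem hvsmeas hiid hident ℓ
    hfmeas hℓmeas hVfin σ αV e1 e2 he1 cγ hcc c hcbd W hWnn αWu αWl d hWub hdet
end
end

section
/- One-step decrease of the Lyapunov-like function: Let Assumptions 1 and 2 hold, let γ ∈ [1/2, 1), Δ > 0 and δ > 0, and define Y_γ(x) := V_γ(x) + W(x)/γ − γc_γ/(1−γ) + d + e₁ and A_{γ,δ} := {x ∈ 𝒳 : α_W(σ(x)) ≤ c_γ + d + η(x) + δ}. Let (x, u) : Ω → 𝒳 × 𝒰 be a random pair such that v is independent of σ(x, u), and such that almost surely u ∈ U_γ^η(x), σ(x) < Δ, and x ∉ A_{γ,δ}. Assume Y_γ(x) and Y_γ(f(x,u,v)) are integrable. Then E[Y_γ(f(x, u, v))] − E[Y_γ(x)] ≤ γ^{-1}((1−γ)(ᾱ_V(Δ)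 + e₂) − δ). -/
open MeasureTheory Set Filter
open scoped ENNReal NNReal

noncomputable section

variable {𝕏 𝕌 𝕍 Ω : Type*}

/-!
Since `v` is independent of `(x, u)`, the expectation of `Y_γ(f(x, u, v))` can be computed by
first integrating over `v` with `(x, u)` frozen, so it suffices to bound that inner integral at
each admissible pair. There, after multiplying by `γ`, the stage cost cancels between the
near-optimality of `u` and detectability:
`γ (E[Y_γ(f(x, u, v))] - Y_γ(x)) ≤ (1 - γ) V_γ(x) + η(x) - α_W(σ(x)) + d`,
which is at most `(1 - γ) V_γ(x) - c_γ - δ` because `x ∉ A_{γ,δ}`, and cost-controllability bounds `(1 - γ) V_γ(x) - c_γ` by `(1 - γ) (ᾱ_V(Δ) + e₂)`.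
-/

open ProbabilityTheory Function

section Freezing

variable {E : Type*} [MeasurableSpace Ω] [MeasurableSpace 𝕏] [MeasurableSpace 𝕍]
  [NormedAddCommGroup E] {P : Measure Ω} {z : Ω → 𝕏} {v : Ω → 𝕍} {F : 𝕏 → 𝕍 → E}

lemma integral_map_eq_integral_comp_right [NormedSpace ℝ E] (hv : AEMeasurable v P)
    (hF : StronglyMeasurable (uncurry F)) (x : 𝕏) :
    ∫ w, F x w ∂P.map v = ∫ ω, F x (v ω) ∂P :=
  integral_map hv (hF.comp_measurable measurable_prodMk_left).aestronglyMeasurable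

variable [IsFiniteMeasure P]

lemma ProbabilityTheory.IndepFun.integrable_uncurry_map_prod (hind : IndepFun z v P)
    (hz : AEMeasurable z P) (hv : AEMeasurable v P) (hF : StronglyMeasurable (uncurry F))
    (hint : Integrable (fun ω => F (z ω) (v ω)) P) :
    Integrable (uncurry F) ((P.map z).prod (P.map v)) := by
  rw [← (indepFun_iff_map_prod_eq_prod_map_map hz hv).mp hind,
    integrable_map_measure hF.aestronglyMeasurable (hz.prodMk hv)]
  exact hint

lemma ProbabilityTheory.IndepFun.ae_integrable_comp (hind : IndepFun z v P)
    (hz : AEMeasurable z P) (hv : AEMeasurable v P) (hF : StronglyMeasurable (uncurry F))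
    (hint : Integrable (fun ω => F (z ω) (v ω)) P) :
    ∀ᵐ ω ∂P, Integrable (fun ω' => F (z ω) (v ω')) P := by
  refine ae_of_ae_map (p := fun x => Integrable (fun ω' => F x (v ω')) P) hz ?_
  filter_upwards [(hind.integrable_uncurry_map_prod hz hv hF hint).prod_right_ae] with x hx
  exact (integrable_map_measure
    (hF.comp_measurable measurable_prodMk_left).aestronglyMeasurable hv).mp hx

variable [NormedSpace ℝ E]

lemma ProbabilityTheory.IndepFun.integral_comp_eq_integral_integral (hind : IndepFun z v P)
    (hz : AEMeasurable z P) (hv : AEMeasurable v P) (hF : StronglyMeasurable (uncurry F))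
    (hint : Integrable (fun ω => F (z ω) (v ω)) P) :
    ∫ ω, F (z ω) (v ω) ∂P = ∫ ω, ∫ ω', F (z ω) (v ω') ∂P ∂P := by
  calc ∫ ω, F (z ω) (v ω) ∂P
      = ∫ p, uncurry F p ∂(P.map z).prod (P.map v) := by
        rw [← (indepFun_iff_map_prod_eq_prod_map_map hz hv).mp hind,
          integral_map (hz.prodMk hv) hF.aestronglyMeasurable]
        rfl
    _ = ∫ x, ∫ w, F x w ∂P.map v ∂P.map z :=
        integral_prod _ (hind.integrable_uncurry_map_prod hz hv hF hint)
    _ = ∫ ω, ∫ ω', F (z ω) (v ω') ∂P ∂P := by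
        rw [integral_map (f := fun x => ∫ w, F x w ∂P.map v) hz
          hF.integral_prod_right'.aestronglyMeasurable]
        simp only [integral_map_eq_integral_comp_right hv hF]

lemma ProbabilityTheory.IndepFun.integrable_integral_comp (hind : IndepFun z v P)
    (hz : AEMeasurable z P) (hv : AEMeasurable v P) (hF : StronglyMeasurable (uncurry F))
    (hint : Integrable (fun ω => F (z ω) (v ω)) P) :
    Integrable (fun ω => ∫ ω', F (z ω) (v ω') ∂P) P := by
  have h := (integrable_map_measure hF.integral_prod_right'.aestronglyMeasurable hz).mp
    (hind.integrable_uncurry_map_prod hz hv hF hint).integral_prod_left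
  simpa only [comp_def, uncurry_apply_pair, integral_map_eq_integral_comp_right hv hF] using h

lemma ProbabilityTheory.IndepFun.integral_comp_le_of_ae_le {F : 𝕏 → 𝕍 → ℝ} {G : 𝕏 → ℝ}
    (hind : IndepFun z v P)
    (hz : AEMeasurable z P) (hv : AEMeasurable v P) (hF : StronglyMeasurable (uncurry F))
    (hint : Integrable (fun ω => F (z ω) (v ω)) P) (hG : Integrable (fun ω => G (z ω)) P)
    (hle : ∀ᵐ ω ∂P, Integrable (fun ω' => F (z ω) (v ω')) P →
      ∫ ω', F (z ω) (v ω') ∂P ≤ G (z ω)) :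
    ∫ ω, F (z ω) (v ω) ∂P ≤ ∫ ω, G (z ω) ∂P := by
  rw [hind.integral_comp_eq_integral_integral hz hv hF hint]
  refine integral_mono_ae (hind.integrable_integral_comp hz hv hF hint) hG ?_
  filter_upwards [hle, hind.ae_integrable_comp hz hv hF hint] with ω hω hωint
  exact hω hωint

end Freezing

section Lyapunov

variable [MeasurableSpace Ω] {P : Measure Ω} {V W : 𝕏 → ℝ} {γ c d e : ℝ}

/-- The function `Y_γ` of the paper, for an arbitrary `V` in place of `V_γ`. -/
def lyapunovFun (V W : 𝕏 → ℝ) (γ c d e : ℝ) (x : 𝕏) : ℝ :=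
  V x + W x / γ - γ * c / (1 - γ) + d + e

lemma measurable_lyapunovFun [MeasurableSpace 𝕏] (hV : Measurable V) (hW : Measurable W) :
    Measurable (lyapunovFun V W γ c d e) := by
  unfold lyapunovFun
  fun_prop

lemma Integrable.left_of_add_of_nonneg {f g : Ω → ℝ} (hf : AEStronglyMeasurable f P)
    (hf0 : 0 ≤ᵐ[P] f) (hg0 : 0 ≤ᵐ[P] g) (hfg : Integrable (fun ω => f ω + g ω) P) :
    Integrable f P := by
  refine hfg.mono' hf ?_
  filter_upwards [hf0, hg0] with ω (hfω : 0 ≤ f ω) (hgω : 0 ≤ g ω)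
  rw [Real.norm_eq_abs, abs_of_nonneg hfω]
  linarith

lemma integral_lyapunovFun_comp [IsProbabilityMeasure P] {ξ : Ω → 𝕏}
    (hV : ∀ x, 0 ≤ V x) (hW : ∀ x, 0 ≤ W x) (hγ : 0 ≤ γ)
    (hVξ : AEStronglyMeasurable (fun ω => V (ξ ω)) P)
    (hint : Integrable (fun ω => lyapunovFun V W γ c d e (ξ ω)) P) :
    ∫ ω, lyapunovFun V W γ c d e (ξ ω) ∂P =
      ∫ ω, V (ξ ω) ∂P + (∫ ω, W (ξ ω) ∂P) / γ - γ * c / (1 - γ) + d + e := by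
  have hsplit : (fun ω => lyapunovFun V W γ c d e (ξ ω)) =
      fun ω => V (ξ ω) + W (ξ ω) / γ + (d + e - γ * c / (1 - γ)) := by
    funext ω
    unfold lyapunovFun
    ring
  have hsum : Integrable (fun ω => V (ξ ω) + W (ξ ω) / γ) P :=
    (integrable_add_iff_integrable_left' (integrable_const _)).mp (hsplit ▸ hint)
  have hVint : Integrable (fun ω => V (ξ ω)) P :=
    Integrable.left_of_add_of_nonneg hVξ (ae_of_all _ fun _ => hV _)
      (ae_of_all _ fun _ => div_nonneg (hW _) hγ) hsum
  rw [hsplit, integral_add hsum (integrable_const _),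
    integral_add hVint ((integrable_add_iff_integrable_right' hVint).mp hsum), integral_div,
    integral_const, probReal_univ, one_smul]
  ring

lemma integral_lyapunovFun_comp_le [IsProbabilityMeasure P] {ξ : Ω → 𝕏} {x : 𝕏}
    {ℓx ηx αx D δ : ℝ} (hV : ∀ x, 0 ≤ V x) (hW : ∀ x, 0 ≤ W x) (hγ : 0 < γ) (hγ1 : γ < 1)
    (hVξ : AEStronglyMeasurable (fun ω => V (ξ ω)) P)
    (hint : Integrable (fun ω => lyapunovFun V W γ c d e (ξ ω)) P)
    (hopt : ℓx + γ * ∫ ω, V (ξ ω) ∂P ≤ V x + ηx)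
    (hdet : (∫ ω, W (ξ ω) ∂P) - W x ≤ -αx + ℓx + d)
    (hA : c + d + ηx + δ < αx) (hctrl : V x - c / (1 - γ) ≤ D) :
    ∫ ω, lyapunovFun V W γ c d e (ξ ω) ∂P ≤
      lyapunovFun V W γ c d e x + γ⁻¹ * ((1 - γ) * D - δ) := by
  have hctrl_mul : (1 - γ) * V x - c ≤ (1 - γ) * D := by
    have h := mul_le_mul_of_nonneg_left hctrl (sub_nonneg.mpr hγ1.le)
    rwa [mul_sub, mul_div_cancel₀ _ (sub_ne_zero.mpr hγ1.ne')] at h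
  calc ∫ ω, lyapunovFun V W γ c d e (ξ ω) ∂P
      = lyapunovFun V W γ c d e x +
          γ⁻¹ * ((γ * ∫ ω, V (ξ ω) ∂P + ∫ ω, W (ξ ω) ∂P) - (γ * V x + W x)) := by
        rw [integral_lyapunovFun_comp hV hW hγ.le hVξ hint]
        unfold lyapunovFun
        field_simp
        ring
    _ ≤ lyapunovFun V W γ c d e x + γ⁻¹ * ((1 - γ) * D - δ) := by
        gcongr _ + γ⁻¹ * ?_
        linarith

end Lyapunov

theorem one_step_decrease_of_lyapunov_function_general
    (n m q : ℕ) (Ω : Type) [MeasurableSpace Ω] (P : Measure Ω) [IsProbabilityMeasure P]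
    (X : Set (Euc n)) (U : Set (Euc m))
    (f : Euc n → Euc m → Euc q → Euc n)
    (v : Ω → Euc q) (vs : ℕ → Ω → Euc q)
    (hv : Measurable v)
    (ℓ : Euc n → Euc m → ℝ)
    (η : Euc n → ℝ)
    -- Assumption 1 (measurability; `V_γ` finite and measurable)
    (hfmeas : Measurable fun p : Euc n × Euc m × Euc q => f p.1 p.2.1 p.2.2)
    (hVmeas : ∀ γ ∈ Ioo (0:ℝ) 1, Measurable (value P X U f vs ℓ γ))
    -- state-space measure `σ`
    (σ : Euc n → ℝ) (hσnn : ∀ x, 0 ≤ σ x)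
    -- Assumption 2(i): cost-controllability with lower bound
    (αV : ℝ → ℝ) (hαV : IsKInfty αV)
    (e1 e2 : ℝ)
    (cγ : ℝ → ℝ)
    (hcc : ∀ γ ∈ Ioo (0:ℝ) 1, ∀ x ∈ X,
      -e1 ≤ value P X U f vs ℓ γ x - cγ γ / (1 - γ) ∧
        value P X U f vs ℓ γ x - cγ γ / (1 - γ) ≤ e2 + αV (σ x))
    -- Assumption 2(ii): detectability
    (W : Euc n → ℝ) (hWnn : ∀ x, 0 ≤ W x) (hWmeas : Measurable W)
    (αWl : ℝ → ℝ)
    (d : ℝ)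
    (hdet : ∀ x ∈ X, ∀ u ∈ U,
      (∫ ω, W (f x u (v ω)) ∂P) - W x ≤ -αWl (σ x) + ℓ x u + d)
    (γ : ℝ) (hγ : γ ∈ Ico (1/2 : ℝ) 1) (Δ δ : ℝ)
    (xr : Ω → Euc n) (ur : Ω → Euc m) (hxr : Measurable xr) (hur : Measurable ur)
    (hindep : ProbabilityTheory.IndepFun v (fun ω => (xr ω, ur ω)) P)
    (has : ∀ᵐ ω ∂P, xr ω ∈ X ∧ ur ω ∈ Ufb P X U f vs v ℓ η γ (xr ω) ∧ σ (xr ω) < Δ ∧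
      ¬ αWl (σ (xr ω)) ≤ cγ γ + d + η (xr ω) + δ)
    (hint1 : Integrable (fun ω =>
      value P X U f vs ℓ γ (xr ω) + W (xr ω) / γ - γ * cγ γ / (1 - γ) + d + e1) P)
    (hint2 : Integrable (fun ω =>
      value P X U f vs ℓ γ (f (xr ω) (ur ω) (v ω)) + W (f (xr ω) (ur ω) (v ω)) / γ -
        γ * cγ γ / (1 - γ) + d + e1) P)
    :
    (∫ ω, (value P X U f vs ℓ γ (f (xr ω) (ur ω) (v ω)) +
          W (f (xr ω) (ur ω) (v ω)) / γ - γ * cγ γ / (1 - γ) + d + e1) ∂P) -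
        ∫ ω, (value P X U f vs ℓ γ (xr ω) + W (xr ω) / γ - γ * cγ γ / (1 - γ) + d + e1) ∂P ≤
      γ⁻¹ * ((1 - γ) * (αV Δ + e2) - δ) := by
  obtain ⟨hγ0, hγ1⟩ : 0 < γ ∧ γ < 1 := ⟨by linarith [hγ.1], hγ.2⟩
  have hVm : Measurable (value P X U f vs ℓ γ) := hVmeas γ ⟨hγ0, hγ1⟩
  have hV0 : ∀ x, 0 ≤ value P X U f vs ℓ γ x := fun _ => ENNReal.toReal_nonneg
  set Y := lyapunovFun (value P X U f vs ℓ γ) W γ (cγ γ) d e1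
  set B := γ⁻¹ * ((1 - γ) * (αV Δ + e2) - δ)
  have hf' : Measurable fun p : (Euc n × Euc m) × Euc q => f p.1.1 p.1.2 p.2 :=
    hfmeas.comp (f := fun p : (Euc n × Euc m) × Euc q => (p.1.1, p.1.2, p.2)) (by fun_prop)
  have hYf : Measurable fun p : (Euc n × Euc m) × Euc q => Y (f p.1.1 p.1.2 p.2) :=
    (measurable_lyapunovFun hVm hWmeas).comp hf'
  have hstep : ∀ᵐ ω ∂P, Integrable (fun ω' => Y (f (xr ω) (ur ω) (v ω'))) P →
      ∫ ω', Y (f (xr ω) (ur ω) (v ω')) ∂P ≤ Y (xr ω) + B := by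
    filter_upwards [has] with ω ⟨hx, ⟨hu, hopt⟩, hσΔ, hA⟩ hint
    have hξ : Measurable fun ω' => f (xr ω) (ur ω) (v ω') :=
      hf'.comp (f := fun ω' => ((xr ω, ur ω), v ω')) (measurable_const.prodMk hv)
    refine integral_lyapunovFun_comp_le (ξ := fun ω' => f (xr ω) (ur ω) (v ω')) hV0 hWnn hγ0
      hγ1 (hVm.comp hξ).aestronglyMeasurable hint hopt (hdet _ hx _ hu) (not_le.mp hA) ?_
    have hσ0 := hσnn (xr ω)
    have hαV : αV (σ (xr ω)) ≤ αV Δ :=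
      hαV.2.1.monotoneOn hσ0 (hσ0.trans hσΔ.le) hσΔ.le
    linarith [(hcc γ ⟨hγ0, hγ1⟩ _ hx).2]
  have hYx : Integrable (fun ω => Y (xr ω)) P := hint1
  have hYnext : Integrable (fun ω => Y (f (xr ω) (ur ω) (v ω))) P := hint2
  have hdecr : ∫ ω, Y (f (xr ω) (ur ω) (v ω)) ∂P ≤ ∫ ω, (Y (xr ω) + B) ∂P :=
    hindep.symm.integral_comp_le_of_ae_le (z := fun ω => (xr ω, ur ω))
      (F := fun p w => Y (f p.1 p.2 w))
      (G := fun p => Y p.1 + B) (hxr.prodMk hur).aemeasurable hv.aemeasurable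
      hYf.stronglyMeasurable hYnext (hYx.add (integrable_const B)) hstep
  rw [integral_add hYx (integrable_const B), integral_const, probReal_univ, one_smul] at hdecr
  exact sub_le_iff_le_add'.mpr hdecr

theorem one_step_decrease_of_lyapunov_function
    (n m q : ℕ) (Ω : Type) [MeasurableSpace Ω] (P : Measure Ω) [IsProbabilityMeasure P]
    (X : Set (Euc n)) (U : Set (Euc m)) (Vs : Set (Euc q))
    (hX : IsClosed X) (hU : IsClosed U) (hVs : MeasurableSet Vs)
    (f : Euc n → Euc m → Euc q → Euc n)
    (hfmaps : ∀ x ∈ X, ∀ u ∈ U, ∀ w ∈ Vs, f x u w ∈ X)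
    (v : Ω → Euc q) (vs : ℕ → Ω → Euc q)
    (hv : Measurable v) (hvmem : ∀ ω, v ω ∈ Vs)
    (hvsmeas : ∀ k, Measurable (vs k)) (hvsmem : ∀ k ω, vs k ω ∈ Vs)
    (hiid : ProbabilityTheory.iIndepFun vs P)
    (hident : ∀ k, Measure.map (vs k) P = Measure.map v P)
    (ℓ : Euc n → Euc m → ℝ) (hℓnn : ∀ x u, 0 ≤ ℓ x u)
    (η : Euc n → ℝ) (hηnn : ∀ x, 0 ≤ η x)
    -- Assumption 1 (measurability; `V_γ` finite and measurable)
    (hfmeas : Measurable fun p : Euc n × Euc m × Euc q => f p.1 p.2.1 p.2.2)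
    (hℓmeas : Measurable fun p : Euc n × Euc m => ℓ p.1 p.2)
    (hηmeas : Measurable η)
    (hVfin : ∀ γ ∈ Ioo (0:ℝ) 1, ∀ x ∈ X, evalue P X U f vs ℓ γ x ≠ ⊤)
    (hVmeas : ∀ γ ∈ Ioo (0:ℝ) 1, Measurable (value P X U f vs ℓ γ))
    -- state-space measure `σ`
    (σ : Euc n → ℝ) (hσnn : ∀ x, 0 ≤ σ x) (hσmeas : Measurable σ)
    (hσlocb : ∀ K ⊆ X, IsCompact K → Bornology.IsBounded (σ '' K))
    (hσru : ∀ B : Set ℝ, Bornology.IsBounded B → Bornology.IsBounded {x ∈ X | σ x ∈ B})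
    -- Assumption 2(i): cost-controllability with lower bound
    (αV : ℝ → ℝ) (hαV : IsKInfty αV)
    (e1 e2 : ℝ) (he1 : 0 ≤ e1) (he2 : 0 ≤ e2)
    (cγ : ℝ → ℝ) (hcγnn : ∀ γ ∈ Ioo (0:ℝ) 1, 0 ≤ cγ γ)
    (hcc : ∀ γ ∈ Ioo (0:ℝ) 1, ∀ x ∈ X,
      -e1 ≤ value P X U f vs ℓ γ x - cγ γ / (1 - γ) ∧
        value P X U f vs ℓ γ x - cγ γ / (1 - γ) ≤ e2 + αV (σ x))
    (c : ℝ) (hcnn : 0 ≤ c) (hcbd : ∀ γ ∈ Ioo (0:ℝ) 1, cγ γ ≤ c)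
    -- Assumption 2(ii): detectability
    (W : Euc n → ℝ) (hWnn : ∀ x, 0 ≤ W x) (hWmeas : Measurable W)
    (αWu αWl : ℝ → ℝ) (hαWu : IsKInfty αWu) (hαWl : IsKInfty αWl)
    (d : ℝ) (hd : 0 < d)
    (hWub : ∀ x ∈ X, W x ≤ αWu (σ x))
    (hdet : ∀ x ∈ X, ∀ u ∈ U,
      (∫ ω, W (f x u (v ω)) ∂P) - W x ≤ -αWl (σ x) + ℓ x u + d)
    (γ : ℝ) (hγ : γ ∈ Ico (1/2 : ℝ) 1) (Δ δ : ℝ) (hΔ : 0 < Δ) (hδ : 0 < δ)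
    (xr : Ω → Euc n) (ur : Ω → Euc m) (hxr : Measurable xr) (hur : Measurable ur)
    (hindep : ProbabilityTheory.IndepFun v (fun ω => (xr ω, ur ω)) P)
    (has : ∀ᵐ ω ∂P, xr ω ∈ X ∧ ur ω ∈ Ufb P X U f vs v ℓ η γ (xr ω) ∧ σ (xr ω) < Δ ∧
      ¬ αWl (σ (xr ω)) ≤ cγ γ + d + η (xr ω) + δ)
    (hint1 : Integrable (fun ω =>
      value P X U f vs ℓ γ (xr ω) + W (xr ω) / γ - γ * cγ γ / (1 - γ) + d + e1) P)
    (hint2 : Integrable (fun ω =>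
      value P X U f vs ℓ γ (f (xr ω) (ur ω) (v ω)) + W (f (xr ω) (ur ω) (v ω)) / γ -
        γ * cγ γ / (1 - γ) + d + e1) P)
    :
    (∫ ω, (value P X U f vs ℓ γ (f (xr ω) (ur ω) (v ω)) +
          W (f (xr ω) (ur ω) (v ω)) / γ - γ * cγ γ / (1 - γ) + d + e1) ∂P) -
        ∫ ω, (value P X U f vs ℓ γ (xr ω) + W (xr ω) / γ - γ * cγ γ / (1 - γ) + d + e1) ∂P ≤
      γ⁻¹ * ((1 - γ) * (αV Δ + e2) - δ) :=
  one_step_decrease_of_lyapunov_function_general n m q Ω P X U f v vs hv ℓ η hfmeas hVmeas σ hσnn αV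
    hαV e1 e2 cγ hcc W hWnn hWmeas αWl d hdet γ hγ Δ δ xr ur hxr hur hindep has hint1 hint2
end
end
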